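/- arXiv:1612.02985 — 6 statements merged into one kernel-verified Lean document; each statement's English description precedes it below -/
import Mathlib

section
/- Assume a trading system with trade results t_1, …, t_N ∈ ℝ \ {0}, at least one of which is negative, maximal loss t̂ := max{|t_i| : t_i < 0} > 0, multiplicities N_i ∈ ℕ with N_i ≥ 1, and positive expectation Σ_{i=1}^N (N_i/N̂)·t_i > 0 where N̂ := Σ_{i=1}^N N_i. Then the terminal wealth relative TWR(f) := Π_{i=1}^N (1 + f·t_i/t̂)^{N_i}, f ∈ [0,1], attains its maximum over [0,1] at exactly one point f^opt, and f^opt ∈ (0,1). -/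
/-!
Write `cᵢ = tᵢ / t̂ ≥ -1`, so that `TWR(f) = ∏ (1 + f cᵢ)^{Nᵢ}`. Then `TWR(0) = 1`, while
`TWR(1) = 0` because the worst trade has `cᵢ = -1`; the derivative at `0` is `∑ Nᵢ cᵢ`, a positive
multiple of the expectation, so `TWR` exceeds `1` somewhere in `(0, 1)`. A maximiser on the compact
interval `[0, 1]` therefore lies in `(0, 1)`. It is unique since `TWR` is positive and strictly
log-concave on `[0, 1)`: by AM-GM, `(1 + f c)(1 + g c) < (1 + (f + g)/2 · c)²` whenever `f c ≠ g c`,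
so two distinct maximisers would be beaten by their midpoint.
-/

open Finset Set Filter Topology

lemma eventually_lt_of_hasDerivAt_pos {g : ℝ → ℝ} {g' a : ℝ} (hg : HasDerivAt g g' a)
    (hg' : 0 < g') : ∀ᶠ x in 𝓝[>] a, g a < g x := by
  have hslope : ∀ᶠ x in 𝓝[>] a, 0 < slope g a x :=
    (hg.tendsto_slope.mono_left (nhdsGT_le_nhdsNE a)).eventually (eventually_gt_nhds hg')
  filter_upwards [hslope, self_mem_nhdsWithin] with x hx hax
  exact (slope_pos_iff hax).1 hx

lemma one_add_mul_pos {f c : ℝ} (hc : -1 ≤ c) (hf : f ∈ Ico (0 : ℝ) 1) : 0 < 1 + f * c := by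
  nlinarith [hf.1, hf.2]

lemma one_add_mul_lt_midpoint_sq {f g c : ℝ} (hc : c ≠ 0) (hfg : f ≠ g) :
    (1 + f * c) * (1 + g * c) < (1 + (f + g) / 2 * c) ^ 2 := by
  nlinarith [sq_pos_of_ne_zero (mul_ne_zero (sub_ne_zero.2 hfg) hc)]

namespace OptimalF

variable {ι : Type*} [Fintype ι] (c : ι → ℝ) (n : ι → ℕ)

/-- `c i = tᵢ / t̂` is a trade result normalised by the maximal loss, `n i` its multiplicity. -/
def twr (f : ℝ) : ℝ := ∏ i, (1 + f * c i) ^ n i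

@[simp]
lemma twr_zero : twr c n 0 = 1 := by simp [twr]

variable {c n}

lemma twr_one_eq_zero {i : ι} (hi : c i = -1) (hn : n i ≠ 0) : twr c n 1 = 0 :=
  prod_eq_zero (mem_univ i) (by simp [hi, hn])

lemma twr_pos (hc : ∀ i, -1 ≤ c i) {f : ℝ} (hf : f ∈ Ico (0 : ℝ) 1) : 0 < twr c n f :=
  prod_pos fun i _ => pow_pos (one_add_mul_pos (hc i) hf) _

variable (c n)

lemma continuous_twr : Continuous (twr c n) := by
  unfold twr
  fun_prop

lemma hasDerivAt_twr_zero : HasDerivAt (twr c n) (∑ i, n i * c i) 0 := by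
  classical
  refine (HasDerivAt.fun_finsetProd (u := univ) fun i _ =>
    (((hasDerivAt_id (0 : ℝ)).mul_const (c i)).const_add 1).fun_pow (n i)).congr_deriv ?_
  simp

variable {c n}

lemma exists_one_lt_twr (hpos : 0 < ∑ i, n i * c i) : ∃ f ∈ Ioo (0 : ℝ) 1, 1 < twr c n f := by
  have h := (eventually_lt_of_hasDerivAt_pos (hasDerivAt_twr_zero c n) hpos).and
    (Ioo_mem_nhdsGT_of_mem (left_mem_Ico.2 one_pos))
  obtain ⟨f, hlt, hf⟩ := h.exists
  exact ⟨f, hf, by simpa using hlt⟩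

lemma twr_mul_lt_twr_midpoint_sq (hc : ∀ i, -1 ≤ c i) {i₀ : ι} (hc₀ : c i₀ ≠ 0)
    (hn₀ : n i₀ ≠ 0) {f g : ℝ} (hf : f ∈ Ico (0 : ℝ) 1) (hg : g ∈ Ico (0 : ℝ) 1) (hfg : f ≠ g) :
    twr c n f * twr c n g < twr c n ((f + g) / 2) ^ 2 := by
  have hprod : twr c n f * twr c n g = ∏ i, ((1 + f * c i) * (1 + g * c i)) ^ n i := by
    simp only [twr, ← prod_mul_distrib, mul_pow]
  have hsq : twr c n ((f + g) / 2) ^ 2 = ∏ i, ((1 + (f + g) / 2 * c i) ^ 2) ^ n i := by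
    simp only [twr, ← Finset.prod_pow, pow_right_comm _ 2]
  rw [hprod, hsq]
  refine prod_lt_prod (fun i _ => ?_) (fun i _ => ?_) ⟨i₀, mem_univ _, ?_⟩
  · exact pow_pos (mul_pos (one_add_mul_pos (hc i) hf) (one_add_mul_pos (hc i) hg)) _
  · refine pow_le_pow_left₀ (mul_pos (one_add_mul_pos (hc i) hf)
      (one_add_mul_pos (hc i) hg)).le ?_ _
    nlinarith [sq_nonneg ((f - g) * c i)]
  · exact pow_lt_pow_left₀ (one_add_mul_lt_midpoint_sq hc₀ hfg)
      (mul_pos (one_add_mul_pos (hc i₀) hf) (one_add_mul_pos (hc i₀) hg)).le hn₀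

lemma eq_of_isMaxOn_twr (hc : ∀ i, -1 ≤ c i) {i₀ : ι} (hc₀ : c i₀ ≠ 0) (hn₀ : n i₀ ≠ 0)
    {f g : ℝ} (hf : f ∈ Ico (0 : ℝ) 1) (hg : g ∈ Ico (0 : ℝ) 1)
    (hfmax : IsMaxOn (twr c n) (Icc 0 1) f) (hgmax : IsMaxOn (twr c n) (Icc 0 1) g) : f = g := by
  by_contra hne
  have hmid : (f + g) / 2 ∈ Ico (0 : ℝ) 1 := ⟨by linarith [hf.1, hg.1], by linarith [hf.2, hg.2]⟩
  have hlt := twr_mul_lt_twr_midpoint_sq hc hc₀ hn₀ hf hg hne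
  have hle : twr c n ((f + g) / 2) ≤ twr c n f := hfmax (Ico_subset_Icc_self hmid)
  have hfg : twr c n f ≤ twr c n g := hgmax (Ico_subset_Icc_self hf)
  have hgf : twr c n g ≤ twr c n f := hfmax (Ico_subset_Icc_self hg)
  nlinarith [twr_pos (n := n) hc hmid]

theorem existsUnique_isMaxOn_twr (hc : ∀ i, -1 ≤ c i) {i₀ : ι} (hc₀ : c i₀ = -1)
    (hn₀ : n i₀ ≠ 0) (hpos : 0 < ∑ i, n i * c i) :
    ∃ f ∈ Ioo (0 : ℝ) 1, IsMaxOn (twr c n) (Icc 0 1) f ∧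
      ∀ g ∈ Icc (0 : ℝ) 1, IsMaxOn (twr c n) (Icc 0 1) g → g = f := by
  obtain ⟨f₁, hf₁, hlt⟩ := exists_one_lt_twr hpos
  have one_lt_of_isMaxOn : ∀ g, IsMaxOn (twr c n) (Icc 0 1) g → 1 < twr c n g :=
    fun g hg => hlt.trans_le (hg (Ioo_subset_Icc_self hf₁))
  have mem_Ico_of_isMaxOn :
      ∀ g ∈ Icc (0 : ℝ) 1, IsMaxOn (twr c n) (Icc 0 1) g → g ∈ Ico (0 : ℝ) 1 := by
    refine fun g hg hgmax => ⟨hg.1, hg.2.lt_of_ne fun h => ?_⟩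
    have := one_lt_of_isMaxOn g hgmax
    rw [h, twr_one_eq_zero hc₀ hn₀] at this
    linarith
  obtain ⟨f, hf, hfmax⟩ := isCompact_Icc.exists_isMaxOn (nonempty_Icc.2 zero_le_one)
    (continuous_twr c n).continuousOn
  have hf0 : f ≠ 0 := fun h => by simpa [h] using one_lt_of_isMaxOn f hfmax
  have hf_Ico := mem_Ico_of_isMaxOn f hf hfmax
  refine ⟨f, ⟨hf.1.lt_of_ne' hf0, hf_Ico.2⟩, hfmax, fun g hg hgmax => ?_⟩
  exact eq_of_isMaxOn_twr hc (by rw [hc₀]; norm_num) hn₀ (mem_Ico_of_isMaxOn g hg hgmax)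
    hf_Ico hgmax hfmax

end OptimalF

open OptimalF in
theorem stmt_1_general (N : ℕ) (t : Fin N → ℝ) (that : ℝ)
    (hthat : IsGreatest {x : ℝ | ∃ i, t i < 0 ∧ x = |t i|} that)
    (Nmul : Fin N → ℕ) (hNmul : ∀ i, 1 ≤ Nmul i)
    (Nhat : ℕ)
    (hprof : 0 < ∑ i, ((Nmul i : ℝ) / (Nhat : ℝ)) * t i)
    (TWR : ℝ → ℝ)
    (hTWR : ∀ f, TWR f = ∏ i, (1 + f * t i / that) ^ (Nmul i)) :
    ∃ fopt ∈ Set.Ioo (0 : ℝ) 1,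
      (∀ f ∈ Set.Icc (0 : ℝ) 1, TWR f ≤ TWR fopt) ∧
      (∀ f ∈ Set.Icc (0 : ℝ) 1, (∀ g ∈ Set.Icc (0 : ℝ) 1, TWR g ≤ TWR f) → f = fopt) := by
  obtain ⟨i₀, hti₀, rfl⟩ := hthat.1
  have hthat_pos : 0 < |t i₀| := abs_pos.2 hti₀.ne
  have hc : ∀ i, -1 ≤ t i / |t i₀| := fun i => by
    rw [le_div_iff₀ hthat_pos]
    rcases le_or_gt 0 (t i) with h | h
    · linarith
    · linarith [abs_of_neg h ▸ hthat.2 ⟨i, h, rfl⟩]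
  have hc₀ : t i₀ / |t i₀| = -1 := by
    rw [abs_of_neg hti₀, div_neg, div_self hti₀.ne]
  have hsum : 0 < ∑ i, Nmul i * (t i / |t i₀|) := by
    simp only [div_mul_eq_mul_div, mul_div_assoc', ← sum_div] at hprof ⊢
    have hnum := ((div_pos_iff.1 hprof).resolve_right fun h => h.2.not_ge (Nat.cast_nonneg _)).1
    exact div_pos hnum hthat_pos
  have hTWR' : TWR = twr (fun i => t i / |t i₀|) Nmul := funext fun f => by
    simp only [hTWR, twr, mul_div_assoc]
  subst hTWR'
  exact existsUnique_isMaxOn_twr hc hc₀ (Nat.one_le_iff_ne_zero.1 (hNmul i₀)) hsum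

/-- Vince's optimal f model with multiplicities: the terminal wealth relative
`TWR(f) = ∏ (1 + f·tᵢ/t̂)^{Nᵢ}` attains its maximum over `[0,1]` at exactly one
point `f^opt`, which lies in `(0,1)`. -/
theorem stmt_1 (N : ℕ) (hN : 1 ≤ N) (t : Fin N → ℝ) (ht : ∀ i, t i ≠ 0)
    (hneg : ∃ i, t i < 0) (that : ℝ)
    (hthat : IsGreatest {x : ℝ | ∃ i, t i < 0 ∧ x = |t i|} that)
    (hthat_pos : 0 < that)
    (Nmul : Fin N → ℕ) (hNmul : ∀ i, 1 ≤ Nmul i)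
    (Nhat : ℕ) (hNhat : Nhat = ∑ i, Nmul i)
    (hprof : 0 < ∑ i, ((Nmul i : ℝ) / (Nhat : ℝ)) * t i)
    (TWR : ℝ → ℝ)
    (hTWR : ∀ f, TWR f = ∏ i, (1 + f * t i / that) ^ (Nmul i)) :
    ∃ fopt ∈ Set.Ioo (0 : ℝ) 1,
      (∀ f ∈ Set.Icc (0 : ℝ) 1, TWR f ≤ TWR fopt) ∧
      (∀ f ∈ Set.Icc (0 : ℝ) 1, (∀ g ∈ Set.Icc (0 : ℝ) 1, TWR g ≤ TWR f) → f = fopt) :=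
  stmt_1_general N t that hthat Nmul hNmul Nhat hprof TWR hTWR
end

section
/- Let t̂ > 0 and x_1, …, x_N ≥ 0 be real numbers with Σ_{i=1}^N x_i = M > 0, and let t_1, …, t_N ∈ ℝ \ {0}. Then Σ_{i=1}^N x_i·t_i ≤ 0 if and only if there exists ε > 0 such that h(f) := Σ_{i=1}^N x_i·log(1 + f·t_i/t̂) < 0 for all f ∈ (0, ε). -/
/-!
Since `log (1 + u) < u` for `u ≠ 0`, we have `h f < (f / t̂) · ∑ xᵢ tᵢ` for small `f > 0`, which
gives one direction. Conversely, `h 0 = 0` and `h' 0 = (∑ xᵢ tᵢ) / t̂`, so a positive sum forces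
`h f > 0` for all small `f > 0`.
-/

open Filter Finset Real Topology

theorem eventually_nhdsGT_iff_exists_forall_lt {α : Type*} [TopologicalSpace α] [LinearOrder α]
    [OrderTopology α] [NoMaxOrder α] {a : α} {p : α → Prop} :
    (∀ᶠ x in 𝓝[>] a, p x) ↔ ∃ ε > a, ∀ x, a < x → x < ε → p x := by
  simp only [(nhdsGT_basis a).eventually_iff, Set.mem_Ioo, and_imp, gt_iff_lt]

theorem HasDerivAt.eventually_lt_nhdsGT {f : ℝ → ℝ} {f' a : ℝ} (hf : HasDerivAt f f' a)
    (hf' : 0 < f') : ∀ᶠ x in 𝓝[>] a, f a < f x := by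
  have hslope : ∀ᶠ x in 𝓝[>] a, 0 < slope f a x :=
    (hasDerivAt_iff_tendsto_slope.mp hf).mono_left (nhdsGT_le_nhdsNE a)
      |>.eventually (eventually_gt_nhds hf')
  filter_upwards [hslope, self_mem_nhdsWithin] with x hx hax
  exact (slope_pos_iff hax).mp hx

theorem sum_mul_log_one_add_lt_sum_mul {ι : Type*} [Fintype ι] {w u : ι → ℝ}
    (hw : ∀ i, 0 ≤ w i) (hu : ∀ i, -1 < u i) {j : ι} (hwj : 0 < w j) (huj : u j ≠ 0) :
    ∑ i, w i * log (1 + u i) < ∑ i, w i * u i := by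
  have hlog : ∀ i, log (1 + u i) ≤ u i := fun i => by
    linarith [log_le_sub_one_of_pos (show 0 < 1 + u i by linarith [hu i])]
  have hlog_lt : log (1 + u j) < u j := by
    linarith [log_lt_sub_one_of_pos (show 0 < 1 + u j by linarith [hu j])
      (by simpa using huj)]
  exact sum_lt_sum (fun i _ => mul_le_mul_of_nonneg_left (hlog i) (hw i))
    ⟨j, mem_univ j, mul_lt_mul_of_pos_left hlog_lt hwj⟩

theorem hasDerivAt_sum_mul_log_one_add_mul_div {ι : Type*} [Fintype ι] (w t : ι → ℝ) (c : ℝ) :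
    HasDerivAt (fun f => ∑ i, w i * log (1 + f * t i / c)) ((∑ i, w i * t i) / c) 0 := by
  have hterm : ∀ i, HasDerivAt (fun f => w i * log (1 + f * t i / c)) (w i * t i / c) 0 := by
    intro i
    have hinner := ((hasDerivAt_mul_const (x := 0) (t i)).div_const c).const_add 1
    simpa [mul_div_assoc] using (hinner.log (by simp)).const_mul (w i)
  simpa [sum_div] using HasDerivAt.fun_sum fun i _ => hterm i

/-- Lemma (b): `∑ xᵢ·tᵢ ≤ 0` iff `∑ xᵢ·log(1 + f·tᵢ/t̂) < 0` for all sufficiently small `f > 0`. -/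
theorem stmt_7 (N : ℕ) (that : ℝ) (hthat : 0 < that)
    (x : Fin N → ℝ) (hx : ∀ i, 0 ≤ x i)
    (M : ℝ) (hsum : ∑ i, x i = M) (hM : 0 < M)
    (t : Fin N → ℝ) (ht : ∀ i, t i ≠ 0) :
    (∑ i, x i * t i ≤ 0) ↔
      ∃ ε > 0, ∀ f : ℝ, 0 < f → f < ε →
        ∑ i, x i * Real.log (1 + f * t i / that) < 0 := by
  set h : ℝ → ℝ := fun f => ∑ i, x i * log (1 + f * t i / that)
  rw [← eventually_nhdsGT_iff_exists_forall_lt (p := fun f => h f < 0)]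
  constructor
  · intro hS
    obtain ⟨i₀, -, hxi₀⟩ := exists_lt_of_sum_lt (s := univ) (f := 0) (g := x) (by simpa [hsum])
    have hsmall : ∀ᶠ f in 𝓝 (0 : ℝ), ∀ i, -1 < f * t i / that := by
      refine eventually_all.mpr fun i => ?_
      have : Tendsto (fun f : ℝ => f * t i / that) (𝓝 0) (𝓝 0) := by
        simpa using ((continuous_id.mul continuous_const).div_const that).tendsto (0 : ℝ)
      exact this.eventually (eventually_gt_nhds (by norm_num))
    filter_upwards [nhdsWithin_le_nhds hsmall, self_mem_nhdsWithin] with f hf hfpos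
    calc h f < ∑ i, x i * (f * t i / that) :=
          sum_mul_log_one_add_lt_sum_mul hx hf hxi₀
            (div_ne_zero (mul_ne_zero hfpos.ne' (ht i₀)) hthat.ne')
      _ = f / that * ∑ i, x i * t i := by rw [mul_sum]; congr 1; ext i; ring
      _ ≤ 0 := mul_nonpos_of_nonneg_of_nonpos (div_pos hfpos hthat).le hS
  · intro hneg
    by_contra! hS
    have hpos := (hasDerivAt_sum_mul_log_one_add_mul_div x t that).eventually_lt_nhdsGT
      (div_pos hS hthat)
    obtain ⟨f, hf_pos, hf_neg⟩ := (hpos.and hneg).exists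
    simp only [zero_mul, zero_div, add_zero, log_one, mul_zero, sum_const_zero] at hf_pos
    linarith
end

section
/- There exists ε > 0 such that for all f ∈ (0, ε): E(U^(M)(f,·)) = Σ_{n=1}^N U_n^{(M,N)}·log(1 + f·t_n/t̂), where U_n^{(M,N)} := Σ p_1^{x_1}···p_N^{x_N}·(M!/(x_1!···x_N!))·x_n ≥ 0, the sum running over all (x_1,…,x_N) ∈ ℕ_0^N with Σ_{i=1}^N x_i = M and Σ_{i=1}^N x_i·t_i > 0. -/
/-!
For `f > 0` small enough every factor `1 + f·t/t̂` is positive, and `f ↦ ∑ⱼ log (1 + f·aⱼ)` vanishes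
at `0` with derivative `∑ⱼ aⱼ`. Since `log (1 + x) ≤ x`, the logarithm of `max 1 TWR` is therefore
`∑ⱼ log (1 + f·t_{ωⱼ}/t̂)` when `∑ⱼ t_{ωⱼ} > 0` and `0` otherwise, and as there are only finitely many
`ω` a single `ε` works for all of them. The expectation then depends on `ω` only through its
occupancy vector `x`, and exactly `M!/(x₁!⋯x_N!)` sequences share a given `x`, which is read off
from the multinomial expansion of `(X₁ + ⋯ + X_N)^M`.
-/

open Finset Filter Topology

section Occupancy

variable {ι κ : Type*} [Fintype ι] [DecidableEq κ]

def occupancy (ω : ι → κ) (k : κ) : ℕ := #{j | ω j = k}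

@[to_additive]
lemma prod_comp_eq_prod_pow_occupancy [Fintype κ] {M : Type*} [CommMonoid M] (ω : ι → κ)
    (g : κ → M) : ∏ j, g (ω j) = ∏ k, g k ^ occupancy ω k := by
  rw [← prod_fiberwise' univ ω g]
  exact prod_congr rfl fun k _ => prod_const _

lemma sum_occupancy [Fintype κ] (ω : ι → κ) : ∑ k, occupancy ω k = Fintype.card ι := by
  have h := sum_comp_eq_sum_nsmul_occupancy ω (fun _ => 1)
  simp only [sum_const, card_univ, smul_eq_mul, mul_one] at h
  exact h.symm

open MvPolynomial in
lemma card_occupancy_eq [DecidableEq ι] [Fintype κ] {x : κ → ℕ}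
    (hx : ∑ k, x k = Fintype.card ι) :
    #{ω : ι → κ | occupancy ω = x} = Nat.multinomial univ x := by
  have hmon : ∀ y : κ → ℕ, ∏ k, (X k : MvPolynomial κ ℕ) ^ y k
      = monomial (Finsupp.equivFunOnFinite.symm y) 1 := by
    intro y
    rw [monomial_eq, C_1, one_mul, Finsupp.prod_fintype _ _ (by simp)]
    rfl
  have hpow : ∑ ω : ι → κ, monomial (Finsupp.equivFunOnFinite.symm (occupancy ω)) 1
      = ∑ y ∈ piAntidiag univ (Fintype.card ι),
          monomial (Finsupp.equivFunOnFinite.symm y) (Nat.multinomial univ y) := by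
    calc _ = ∏ _j : ι, ∑ k, (X k : MvPolynomial κ ℕ) := by
          simp_rw [Fintype.prod_sum, prod_comp_eq_prod_pow_occupancy, hmon]
      _ = _ := by
          rw [prod_const, card_univ, sum_pow_eq_sum_piAntidiag]
          refine sum_congr rfl fun y _ => ?_
          rw [hmon, ← C_eq_coe_nat, C_mul_monomial, mul_one, Nat.cast_id]
  have := congrArg (coeff (Finsupp.equivFunOnFinite.symm x)) hpow
  simp only [coeff_sum, coeff_monomial,
    (Finsupp.equivFunOnFinite.symm.injective).eq_iff] at this
  rw [sum_boole, sum_ite_eq', if_pos (mem_piAntidiag.mpr ⟨hx, by simp⟩)] at this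
  exact_mod_cast this

lemma sum_comp_occupancy [DecidableEq ι] [Fintype κ] {R : Type*} [AddCommMonoid R]
    (F : (κ → ℕ) → R) :
    ∑ ω : ι → κ, F (occupancy ω)
      = ∑ x ∈ piAntidiag univ (Fintype.card ι), Nat.multinomial univ x • F x := by
  rw [← sum_fiberwise_of_maps_to' (t := piAntidiag univ (Fintype.card ι)) (g := occupancy)
    (fun ω _ => mem_piAntidiag.mpr ⟨sum_occupancy ω, by simp⟩)]
  refine sum_congr rfl fun x hx => ?_
  rw [sum_const, card_occupancy_eq (mem_piAntidiag.mp hx).1]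

lemma sum_piAntidiag_eq_sum_fin [Fintype κ] {R : Type*} [AddCommMonoid R] (M : ℕ)
    (G : (κ → ℕ) → R) :
    ∑ x ∈ piAntidiag univ M, G x
      = ∑ y ∈ univ.filter (fun y : κ → Fin (M + 1) => ∑ k, (y k : ℕ) = M), G (fun k => y k) := by
  have hle : ∀ x ∈ piAntidiag (univ : Finset κ) M, ∀ k, x k < M + 1 := fun x hx k =>
    Nat.lt_succ_of_le ((mem_piAntidiag.mp hx).1 ▸ single_le_sum (by simp) (mem_univ k))
  refine (sum_nbij' (fun (y : κ → Fin (M + 1)) k => (y k : ℕ))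
    (fun (x : κ → ℕ) k => Fin.ofNat (M + 1) (x k)) ?_ ?_ ?_ ?_ fun _ _ => rfl).symm
  · intro y hy
    simpa using (mem_filter.mp hy).2
  · intro x hx
    simp [Nat.mod_eq_of_lt (hle x hx _), (mem_piAntidiag.mp hx).1]
  · intro y _
    funext k
    simp
  · intro x hx
    funext k
    simp [Nat.mod_eq_of_lt (hle x hx k)]

end Occupancy

lemma Real.log_max_one_of_pos {x : ℝ} (hx : 0 < x) : Real.log (max 1 x) = max 0 (Real.log x) := by
  rcases le_total 1 x with h | h
  · rw [max_eq_right h, max_eq_right (Real.log_nonneg h)]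
  · rw [max_eq_left h, max_eq_left (Real.log_nonpos hx.le h), Real.log_one]

section SmallStakes

variable {ι : Type*} [Fintype ι] (a : ι → ℝ)

lemma eventually_one_add_mul_pos : ∀ᶠ f in 𝓝[>] (0 : ℝ), ∀ j, 0 < 1 + f * a j := by
  refine eventually_all.mpr fun j => nhdsWithin_le_nhds ?_
  have h : Tendsto (fun f : ℝ => 1 + f * a j) (𝓝 0) (𝓝 (1 + 0 * a j)) :=
    (by fun_prop : Continuous fun f : ℝ => 1 + f * a j).tendsto 0
  rw [zero_mul, add_zero] at h
  exact h.eventually (lt_mem_nhds one_pos)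

lemma sum_log_one_add_mul_nonpos {a : ι → ℝ} (ha : ∑ j, a j ≤ 0) {f : ℝ} (hf : 0 ≤ f)
    (hpos : ∀ j, 0 < 1 + f * a j) : ∑ j, Real.log (1 + f * a j) ≤ 0 :=
  calc ∑ j, Real.log (1 + f * a j) ≤ ∑ j, f * a j :=
        sum_le_sum fun j _ => by linarith [Real.log_le_sub_one_of_pos (hpos j)]
    _ = f * ∑ j, a j := (mul_sum _ _ _).symm
    _ ≤ 0 := mul_nonpos_of_nonneg_of_nonpos hf ha

lemma eventually_sum_log_one_add_mul_pos {a : ι → ℝ} (ha : 0 < ∑ j, a j) :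
    ∀ᶠ f in 𝓝[>] (0 : ℝ), 0 < ∑ j, Real.log (1 + f * a j) := by
  have hderiv : HasDerivAt (fun f => ∑ j, Real.log (1 + f * a j)) (∑ j, a j) 0 := by
    have := HasDerivAt.fun_sum (u := univ) fun j _ =>
      (((hasDerivAt_id (0 : ℝ)).mul_const (a j)).const_add 1).log (by simp)
    simpa using this
  filter_upwards [hderiv.tendsto_slope_zero_right.eventually (lt_mem_nhds ha),
    self_mem_nhdsWithin] with f hslope hf
  simp only [zero_add, zero_mul, add_zero, Real.log_one, sum_const_zero, sub_zero,
    smul_eq_mul] at hslope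
  exact (pos_iff_pos_of_mul_pos hslope).mp (inv_pos.mpr hf)

lemma eventually_log_max_one_prod_one_add_mul :
    ∀ᶠ f in 𝓝[>] (0 : ℝ), Real.log (max 1 (∏ j, (1 + f * a j)))
      = if 0 < ∑ j, a j then ∑ j, Real.log (1 + f * a j) else 0 := by
  have key : ∀ᶠ f in 𝓝[>] (0 : ℝ), Real.log (max 1 (∏ j, (1 + f * a j)))
      = max 0 (∑ j, Real.log (1 + f * a j)) := by
    filter_upwards [eventually_one_add_mul_pos a] with f hpos
    rw [Real.log_max_one_of_pos (prod_pos fun j _ => hpos j),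
      Real.log_prod fun j _ => (hpos j).ne']
  split_ifs with ha
  · filter_upwards [key, eventually_sum_log_one_add_mul_pos ha] with f hf hlog
    rw [hf, max_eq_right hlog.le]
  · filter_upwards [key, eventually_one_add_mul_pos a, self_mem_nhdsWithin] with f hf hpos hf0
    rw [hf, max_eq_left (sum_log_one_add_mul_nonpos (not_lt.mp ha) (le_of_lt hf0) hpos)]

end SmallStakes

lemma sum_prod_mul_ite_sum_eq {N M : ℕ} (t p L U : Fin N → ℝ)
    (hU : ∀ n, U n =
      ∑ x ∈ Finset.univ.filter (fun x : Fin N → Fin (M + 1) =>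
          (∑ i, (x i : ℕ)) = M ∧ 0 < ∑ i, ((x i : ℕ) : ℝ) * t i),
        (∏ i, p i ^ (x i : ℕ)) *
          (Nat.multinomial Finset.univ (fun i => (x i : ℕ)) : ℝ) * ((x n : ℕ) : ℝ)) :
    ∑ ω : Fin M → Fin N, (∏ j, p (ω j)) * (if 0 < ∑ j, t (ω j) then ∑ j, L (ω j) else 0)
      = ∑ n, U n * L n := by
  set F : (Fin N → ℕ) → ℝ := fun x =>
    (∏ k, p k ^ x k) * (if 0 < ∑ k, (x k : ℝ) * t k then ∑ k, (x k : ℝ) * L k else 0) with hF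
  have hω : ∀ ω : Fin M → Fin N,
      (∏ j, p (ω j)) * (if 0 < ∑ j, t (ω j) then ∑ j, L (ω j) else 0) = F (occupancy ω) := by
    intro ω
    simp only [hF, prod_comp_eq_prod_pow_occupancy, sum_comp_eq_sum_nsmul_occupancy, nsmul_eq_mul]
  rw [sum_congr rfl fun ω _ => hω ω, sum_comp_occupancy F, Fintype.card_fin,
    sum_piAntidiag_eq_sum_fin]
  simp only [hF, hU, sum_mul]
  rw [sum_comm, ← filter_filter,
    sum_filter (p := fun y : Fin N → Fin (M + 1) => 0 < ∑ i, ((y i : ℕ) : ℝ) * t i)]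
  refine sum_congr rfl fun y _ => ?_
  split_ifs
  · rw [nsmul_eq_mul, mul_sum, mul_sum]
    exact sum_congr rfl fun n _ => by ring
  · simp

theorem stmt_8_general (N : ℕ) (t : Fin N → ℝ) (that : ℝ)
    (hthat_pos : 0 < that)
    (p : Fin N → ℝ)
    (M : ℕ)
    (U : Fin N → ℝ)
    (hU : ∀ n, U n =
      ∑ x ∈ Finset.univ.filter (fun x : Fin N → Fin (M + 1) =>
          (∑ i, (x i : ℕ)) = M ∧ 0 < ∑ i, ((x i : ℕ) : ℝ) * t i),
        (∏ i, p i ^ (x i : ℕ)) *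
          (Nat.multinomial Finset.univ (fun i => (x i : ℕ)) : ℝ) * ((x n : ℕ) : ℝ)) :
    ∃ ε > 0, ∀ f : ℝ, 0 < f → f < ε →
      ∑ ω : Fin M → Fin N,
          (∏ j, p (ω j)) * Real.log (max 1 (∏ j, (1 + f * t (ω j) / that)))
        = ∑ n, U n * Real.log (1 + f * t n / that) := by
  have hsmall : ∀ᶠ f in 𝓝[>] (0 : ℝ), ∀ ω : Fin M → Fin N,
      Real.log (max 1 (∏ j, (1 + f * t (ω j) / that)))
        = if 0 < ∑ j, t (ω j) then ∑ j, Real.log (1 + f * t (ω j) / that) else 0 := by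
    refine eventually_all.mpr fun ω => ?_
    have h := eventually_log_max_one_prod_one_add_mul fun j => t (ω j) / that
    simp_rw [← sum_div, div_pos_iff_of_pos_right hthat_pos, ← mul_div_assoc] at h
    exact h
  obtain ⟨ε, hε, hsub⟩ := mem_nhdsGT_iff_exists_Ioo_subset.mp hsmall
  exact ⟨ε, hε, fun f hf hfε =>
    (sum_congr rfl fun ω _ => congrArg (_ * ·) (hsub ⟨hf, hfε⟩ ω)).trans
      (sum_prod_mul_ite_sum_eq t p (fun n => Real.log (1 + f * t n / that)) U hU)⟩

/-- For sufficiently small `f > 0`, `E(U^(M)(f,·)) = ∑ₙ Uₙ^{(M,N)}·log(1 + f·tₙ/t̂)`, where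
`Uₙ^{(M,N)} = ∑ p₁^{x₁}⋯p_N^{x_N}·(M!/(x₁!⋯x_N!))·xₙ` over all `(x₁,…,x_N) ∈ ℕ₀^N`
with `∑ xᵢ = M` and `∑ xᵢ·tᵢ > 0`. -/
theorem stmt_8 (N : ℕ) (hN : 1 ≤ N) (t : Fin N → ℝ) (ht : ∀ i, t i ≠ 0)
    (hneg : ∃ i, t i < 0) (that : ℝ)
    (hthat : IsGreatest {x : ℝ | ∃ i, t i < 0 ∧ x = |t i|} that)
    (hthat_pos : 0 < that)
    (p : Fin N → ℝ) (hp : ∀ i, 0 < p i) (hpsum : ∑ i, p i = 1)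
    (M : ℕ) (hM : 1 ≤ M)
    (U : Fin N → ℝ)
    (hU : ∀ n, U n =
      ∑ x ∈ Finset.univ.filter (fun x : Fin N → Fin (M + 1) =>
          (∑ i, (x i : ℕ)) = M ∧ 0 < ∑ i, ((x i : ℕ) : ℝ) * t i),
        (∏ i, p i ^ (x i : ℕ)) *
          (Nat.multinomial Finset.univ (fun i => (x i : ℕ)) : ℝ) * ((x n : ℕ) : ℝ)) :
    ∃ ε > 0, ∀ f : ℝ, 0 < f → f < ε →
      ∑ ω : Fin M → Fin N,
          (∏ j, p (ω j)) * Real.log (max 1 (∏ j, (1 + f * t (ω j) / that)))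
        = ∑ n, U n * Real.log (1 + f * t n / that) :=
  stmt_8_general N t that hthat_pos p M U hU
end

section
/- There exists ε > 0 such that for all f ∈ (0, ε): E(D^(M)(f,·)) = Σ_{n=1}^N D_n^{(M,N)}·log(1 + f·t_n/t̂), where D_n^{(M,N)} := Σ p_1^{x_1}···p_N^{x_N}·(M!/(x_1!···x_N!))·x_n ≥ 0, the sum running over all (x_1,…,x_N) ∈ ℕ_0^N with Σ_{i=1}^N x_i = M and Σ_{i=1}^N x_i·t_i ≤ 0. -/
/-!
Fix an outcome `ω` and put `c j = t (ω j) / t̂`. If `∑ c j ≤ 0`, then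
`∏ (1 + f c j) ≤ exp (f ∑ c j) ≤ 1`, so the logarithm of the minimum is `∑ log (1 + f c j)`.
If `∑ c j > 0`, the product has derivative `∑ c j > 0` at `f = 0`, so it exceeds `1` for small
`f > 0` and the term vanishes. Since there are finitely many outcomes, one `ε` serves them all.
Both the case distinction and the summand depend on `ω` only through its occupation numbers
`x i = #{j | ω j = i}`, and exactly `M! / (x₁! ⋯ x_N!)` outcomes share given occupation numbers
(the coefficient of `∏ Xᵢ ^ xᵢ` in `(∑ Xᵢ) ^ M`); grouping the outcomes accordingly turns the
expectation into the sum over `x`.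
-/

open scoped Classical

open Finset Filter Topology Real

section FiberCard

variable {ι : Type*} [Fintype ι] [DecidableEq ι] {M : ℕ}

def fiberCard (ω : Fin M → ι) (i : ι) : ℕ := #{j | ω j = i}

lemma sum_fiberCard (ω : Fin M → ι) : ∑ i, fiberCard ω i = M := by
  simp only [fiberCard]
  rw [← card_eq_sum_card_fiberwise fun j _ => mem_univ (ω j), card_univ, Fintype.card_fin]

@[to_additive sum_comp_eq_sum_fiberCard_nsmul]
lemma prod_comp_eq_prod_pow_fiberCard {R : Type*} [CommMonoid R] (ω : Fin M → ι) (h : ι → R) :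
    ∏ j, h (ω j) = ∏ i, h i ^ fiberCard ω i := by
  simp only [fiberCard, ← prod_const]
  exact (prod_fiberwise_of_maps_to' (fun j _ => mem_univ (ω j)) h).symm

lemma card_filter_fiberCard_eq (x : ι → ℕ) (hx : ∑ i, x i = M) :
    #{ω : Fin M → ι | fiberCard ω = x} = Nat.multinomial univ x := by
  have h := MvPolynomial.coeff_sum_X_pow_of_fintype (R := ℕ) (Finsupp.equivFunOnFinite.symm x) M
  rw [Finsupp.sum_fintype _ _ fun _ => rfl,
    ← Finsupp.multinomial_of_support_subset (subset_univ _)] at h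
  simp only [Finsupp.coe_equivFunOnFinite_symm, hx, if_true, Nat.cast_id] at h
  rw [← h, Fintype.sum_pow, MvPolynomial.coeff_sum, card_filter]
  refine sum_congr rfl fun ω _ => ?_
  rw [prod_comp_eq_prod_pow_fiberCard, MvPolynomial.coeff_prod_X_pow]
  congr 1
  simp [Finsupp.ext_iff, funext_iff, eq_comm]

lemma sum_prod_mul_eq_sum_piAntidiag {R : Type*} [CommSemiring R] (p : ι → R)
    (F : (ι → ℕ) → R) :
    ∑ ω : Fin M → ι, (∏ j, p (ω j)) * F (fiberCard ω) =
      ∑ x ∈ piAntidiag univ M, (∏ i, p i ^ x i) * Nat.multinomial univ x * F x := by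
  simp_rw [prod_comp_eq_prod_pow_fiberCard]
  rw [← sum_fiberwise_of_maps_to (g := fiberCard) fun ω _ =>
    mem_piAntidiag.mpr ⟨sum_fiberCard ω, fun i _ => mem_univ i⟩]
  refine sum_congr rfl fun x hx => ?_
  rw [sum_congr rfl fun ω hω => by rw [(mem_filter.mp hω).2], sum_const,
    card_filter_fiberCard_eq x (mem_piAntidiag.mp hx).1, nsmul_eq_mul]
  ring

lemma sum_piAntidiag_eq_sum_filter_fin {R : Type*} [AddCommMonoid R] (g : (ι → ℕ) → R) :
    ∑ x ∈ piAntidiag univ M, g x =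
      ∑ x ∈ univ.filter (fun x : ι → Fin (M + 1) => ∑ i, (x i : ℕ) = M), g (fun i => x i) := by
  have hlt {k : ι → ℕ} (hk : k ∈ piAntidiag univ M) (i : ι) : k i < M + 1 :=
    Nat.lt_succ_of_le <|
      (mem_piAntidiag.mp hk).1 ▸ single_le_sum (fun _ _ => Nat.zero_le _) (mem_univ i)
  refine (sum_nbij' (fun x i => (x i : ℕ)) (fun k i => Fin.ofNat (M + 1) (k i))
    ?_ ?_ ?_ ?_ ?_).symm
  · simp [mem_piAntidiag]
  · intro k hk
    simp [Nat.mod_eq_of_lt (hlt hk _), (mem_piAntidiag.mp hk).1]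
  · intro x _
    simp
  · intro k hk
    funext i
    simp [Nat.mod_eq_of_lt (hlt hk i)]
  · exact fun _ _ => rfl

end FiberCard

section SmallFactor

variable {ι : Type*} [Fintype ι]

lemma prod_one_add_mul_le_one {c : ι → ℝ} (hc : ∑ i, c i ≤ 0) {f : ℝ} (hf : 0 ≤ f)
    (hpos : ∀ i, 0 ≤ 1 + f * c i) : ∏ i, (1 + f * c i) ≤ 1 :=
  calc ∏ i, (1 + f * c i)
      ≤ ∏ i, exp (f * c i) :=
        prod_le_prod (fun i _ => hpos i) fun i _ => by linarith [add_one_le_exp (f * c i)]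
    _ = exp (f * ∑ i, c i) := by rw [← exp_sum, mul_sum]
    _ ≤ 1 := exp_le_one_iff.mpr (mul_nonpos_of_nonneg_of_nonpos hf hc)

lemma eventually_one_lt_prod_one_add_mul {c : ι → ℝ} (hc : 0 < ∑ i, c i) :
    ∀ᶠ f in 𝓝[>] 0, 1 < ∏ i, (1 + f * c i) := by
  have hderiv : HasDerivAt (fun f => ∏ i, (1 + f * c i)) (∑ i, c i) 0 := by
    simpa using HasDerivAt.fun_finsetProd (u := univ) fun i _ =>
      ((hasDerivAt_id (0 : ℝ)).mul_const (c i)).const_add 1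
  filter_upwards [self_mem_nhdsWithin,
    hderiv.tendsto_slope_zero_right.eventually (lt_mem_nhds hc)] with f (hf : 0 < f) hslope
  simp only [zero_add, zero_mul, add_zero, prod_const_one, smul_eq_mul] at hslope
  linarith [(mul_pos_iff_of_pos_left (inv_pos.mpr hf)).mp hslope]

lemma eventually_forall_pos_one_add_mul (c : ι → ℝ) : ∀ᶠ f in 𝓝 0, ∀ i, 0 < 1 + f * c i :=
  eventually_all.mpr fun i =>
    ((continuous_const.add (continuous_id.mul continuous_const)).tendsto' 0 1 (by simp)).eventually
      (lt_mem_nhds one_pos)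

lemma eventually_log_min_one_prod (c : ι → ℝ) :
    ∀ᶠ f in 𝓝[>] 0, log (min 1 (∏ i, (1 + f * c i))) =
      if ∑ i, c i ≤ 0 then ∑ i, log (1 + f * c i) else 0 := by
  split_ifs with hc
  · filter_upwards [self_mem_nhdsWithin,
      nhdsWithin_le_nhds (eventually_forall_pos_one_add_mul c)] with f (hf : 0 < f) hpos
    rw [min_eq_right (prod_one_add_mul_le_one hc hf.le fun i => (hpos i).le),
      log_prod fun i _ => (hpos i).ne']
  · filter_upwards [eventually_one_lt_prod_one_add_mul (not_le.mp hc)] with f hf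
    rw [min_eq_left hf.le, log_one]

end SmallFactor

theorem stmt_9_general (N : ℕ) (t : Fin N → ℝ) (that : ℝ)
    (hthat_pos : 0 < that)
    (p : Fin N → ℝ)
    (M : ℕ)
    (D : Fin N → ℝ)
    (hD : ∀ n, D n =
      ∑ x ∈ Finset.univ.filter (fun x : Fin N → Fin (M + 1) =>
          (∑ i, (x i : ℕ)) = M ∧ (∑ i, ((x i : ℕ) : ℝ) * t i) ≤ 0),
        (∏ i, p i ^ (x i : ℕ)) *
          (Nat.multinomial Finset.univ (fun i => (x i : ℕ)) : ℝ) * ((x n : ℕ) : ℝ)) :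
    ∃ ε > 0, ∀ f : ℝ, 0 < f → f < ε →
      ∑ ω : Fin M → Fin N,
          (∏ j, p (ω j)) * Real.log (min 1 (∏ j, (1 + f * t (ω j) / that)))
        = ∑ n, D n * Real.log (1 + f * t n / that) := by
  obtain ⟨ε, hε, hsmall⟩ := (nhdsGT_basis 0).eventually_iff.mp <| eventually_all.mpr
    fun ω : Fin M → Fin N => eventually_log_min_one_prod fun j => t (ω j) / that
  refine ⟨ε, hε, fun f hf hfε => ?_⟩
  set L : Fin N → ℝ := fun i => log (1 + f * t i / that)
  set F : (Fin N → ℕ) → ℝ := fun x =>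
    if ∑ i, (x i : ℝ) * t i ≤ 0 then ∑ i, (x i : ℝ) * L i else 0
  have hlog (ω : Fin M → Fin N) :
      log (min 1 (∏ j, (1 + f * t (ω j) / that))) = F (fiberCard ω) := by
    simp only [mul_div_assoc, hsmall ⟨hf, hfε⟩ ω, ← sum_div, div_le_iff₀ hthat_pos, zero_mul,
      sum_comp_eq_sum_fiberCard_nsmul ω t,
      sum_comp_eq_sum_fiberCard_nsmul ω fun i => log (1 + f * (t i / that)), nsmul_eq_mul, F, L]
  calc ∑ ω : Fin M → Fin N, (∏ j, p (ω j)) * log (min 1 (∏ j, (1 + f * t (ω j) / that)))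
      = ∑ ω : Fin M → Fin N, (∏ j, p (ω j)) * F (fiberCard ω) := by simp only [hlog]
    _ = ∑ x ∈ univ.filter (fun x : Fin N → Fin (M + 1) => ∑ i, (x i : ℕ) = M),
          (∏ i, p i ^ (x i : ℕ)) * Nat.multinomial univ (fun i => (x i : ℕ)) *
            F (fun i => x i) := by
      rw [sum_prod_mul_eq_sum_piAntidiag, sum_piAntidiag_eq_sum_filter_fin]
    _ = ∑ n, D n * L n := by
      simp only [hD, sum_mul, F, mul_ite, mul_zero]
      rw [sum_comm, ← sum_filter, filter_filter]
      simp_rw [mul_sum, mul_assoc]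

/-- For sufficiently small `f > 0`, `E(D^(M)(f,·)) = ∑ₙ Dₙ^{(M,N)}·log(1 + f·tₙ/t̂)`, where
`Dₙ^{(M,N)} = ∑ p₁^{x₁}⋯p_N^{x_N}·(M!/(x₁!⋯x_N!))·xₙ` over all `(x₁,…,x_N) ∈ ℕ₀^N`
with `∑ xᵢ = M` and `∑ xᵢ·tᵢ ≤ 0`. -/
theorem stmt_9 (N : ℕ) (hN : 1 ≤ N) (t : Fin N → ℝ) (ht : ∀ i, t i ≠ 0)
    (hneg : ∃ i, t i < 0) (that : ℝ)
    (hthat : IsGreatest {x : ℝ | ∃ i, t i < 0 ∧ x = |t i|} that)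
    (hthat_pos : 0 < that)
    (p : Fin N → ℝ) (hp : ∀ i, 0 < p i) (hpsum : ∑ i, p i = 1)
    (M : ℕ) (hM : 1 ≤ M)
    (D : Fin N → ℝ)
    (hD : ∀ n, D n =
      ∑ x ∈ Finset.univ.filter (fun x : Fin N → Fin (M + 1) =>
          (∑ i, (x i : ℕ)) = M ∧ (∑ i, ((x i : ℕ) : ℝ) * t i) ≤ 0),
        (∏ i, p i ^ (x i : ℕ)) *
          (Nat.multinomial Finset.univ (fun i => (x i : ℕ)) : ℝ) * ((x n : ℕ) : ℝ)) :
    ∃ ε > 0, ∀ f : ℝ, 0 < f → f < ε →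
      ∑ ω : Fin M → Fin N,
          (∏ j, p (ω j)) * Real.log (min 1 (∏ j, (1 + f * t (ω j) / that)))
        = ∑ n, D n * Real.log (1 + f * t n / that) :=
  stmt_9_general N t that hthat_pos p M D hD
end

section
/- For every f ∈ [0,1) and every ω ∈ Ω^(M), the current drawdown log series and the run-up log series sum to the total log return: Dcur^(M)(f,ω) + R^(M)(f,ω) = log TWR_1^M(f,ω), where Dcur^(M)(f,ω) := log(min_{1≤ℓ≤M} min{1, TWR_ℓ^M(f,ω)}) and R^(M)(f,ω) := log(max_{1≤ℓ≤M} max{1, TWR_1^ℓ(f,ω)}). -/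
/-- Pointwise: current drawdown log series plus run-up log series equals the total
log return: `Dcur^(M)(f,ω) + R^(M)(f,ω) = log TWR₁^M(f,ω)`. -/
theorem stmt_10 (N : ℕ) (hN : 1 ≤ N) (t : Fin N → ℝ) (ht : ∀ i, t i ≠ 0)
    (hneg : ∃ i, t i < 0) (that : ℝ)
    (hthat : IsGreatest {x : ℝ | ∃ i, t i < 0 ∧ x = |t i|} that)
    (hthat_pos : 0 < that)
    (p : Fin N → ℝ) (hp : ∀ i, 0 < p i) (hpsum : ∑ i, p i = 1)
    (M : ℕ) (hM : 1 ≤ M) :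
    ∀ f ∈ Set.Ico (0 : ℝ) 1, ∀ ω : Fin M → Fin N,
      Real.log ((Finset.univ : Finset (Fin M)).inf'
          (Finset.univ_nonempty_iff.mpr (Fin.pos_iff_nonempty.mp hM))
          (fun ℓ => min 1 (∏ j ∈ Finset.univ.filter (fun j : Fin M => ℓ ≤ j),
            (1 + f * t (ω j) / that))))
      + Real.log ((Finset.univ : Finset (Fin M)).sup'
          (Finset.univ_nonempty_iff.mpr (Fin.pos_iff_nonempty.mp hM))
          (fun ℓ => max 1 (∏ j ∈ Finset.univ.filter (fun j : Fin M => j ≤ ℓ),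
            (1 + f * t (ω j) / that))))
      = Real.log (∏ j, (1 + f * t (ω j) / that)) := by
  intro f hf ω
  obtain ⟨hf0, hf1⟩ := hf
  have hne : (Finset.univ : Finset (Fin M)).Nonempty :=
    Finset.univ_nonempty_iff.mpr (Fin.pos_iff_nonempty.mp hM)
  have hbound : ∀ i, -that ≤ t i := by
    intro i
    rcases lt_or_ge (t i) 0 with h | h
    · have h2 := hthat.2 ⟨i, h, rfl⟩
      rw [abs_of_neg h] at h2
      linarith
    · linarith
  set g : Fin M → ℝ := fun j => 1 + f * t (ω j) / that with hgdef
  have hgpos : ∀ j, 0 < g j := by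
    intro j
    have h1 : 0 < that + f * t (ω j) := by nlinarith [hbound (ω j)]
    have h2 : 0 < (that + f * t (ω j)) / that := div_pos h1 hthat_pos
    rwa [add_div, div_self hthat_pos.ne'] at h2
  set P : ℝ := ∏ j, g j with hPdef
  have hP : 0 < P := Finset.prod_pos fun j _ => hgpos j
  set Q : ℕ → ℝ :=
    fun k => ∏ j ∈ Finset.univ.filter (fun j : Fin M => (j : ℕ) < k), g j with hQdef
  have hQpos : ∀ k, 0 < Q k := fun k => Finset.prod_pos fun j _ => hgpos j
  have hQ0 : Q 0 = 1 := by simp [hQdef]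
  have hQM : Q M = P := by
    simp only [hQdef, hPdef]
    rw [Finset.filter_true_of_mem (fun j _ => j.isLt)]
  have hsuffix : ∀ ℓ : Fin M,
      (∏ j ∈ Finset.univ.filter (fun j : Fin M => ℓ ≤ j), g j) = P / Q (ℓ : ℕ) := by
    intro ℓ
    rw [eq_div_iff (hQpos _).ne']
    have h := Finset.prod_filter_mul_prod_filter_not Finset.univ
      (fun j : Fin M => (j : ℕ) < (ℓ : ℕ)) g
    have hfe : Finset.univ.filter (fun j : Fin M => ¬ (j : ℕ) < (ℓ : ℕ))
        = Finset.univ.filter (fun j : Fin M => ℓ ≤ j) := by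
      apply Finset.filter_congr
      intro j _
      simp only [not_lt, Fin.le_def]
    rw [hfe] at h
    rw [mul_comm]
    exact h
  have hprefix : ∀ ℓ : Fin M,
      (∏ j ∈ Finset.univ.filter (fun j : Fin M => j ≤ ℓ), g j) = Q ((ℓ : ℕ) + 1) := by
    intro ℓ
    apply Finset.prod_congr _ (fun _ _ => rfl)
    apply Finset.filter_congr
    intro j _
    simp only [Fin.le_def, Nat.lt_succ_iff]
  have hrange : (Finset.range (M + 1)).Nonempty := ⟨0, Finset.mem_range.mpr (by omega)⟩
  set Z : ℝ := (Finset.range (M + 1)).sup' hrange Q with hZdef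
  have hQZ : ∀ k, k ≤ M → Q k ≤ Z := by
    intro k hk
    exact Finset.le_sup' Q (Finset.mem_range.mpr (by omega))
  have hPZ : P ≤ Z := by rw [← hQM]; exact hQZ M le_rfl
  have hZpos : 0 < Z := lt_of_lt_of_le hP hPZ
  have hmin : ∀ ℓ : Fin M,
      min 1 (∏ j ∈ Finset.univ.filter (fun j : Fin M => ℓ ≤ j), g j)
        = P / max P (Q (ℓ : ℕ)) := by
    intro ℓ
    rw [hsuffix ℓ]
    rcases le_total P (Q (ℓ : ℕ)) with h | h
    · rw [max_eq_right h, min_eq_right ((div_le_one (hQpos _)).mpr h)]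
    · rw [max_eq_left h, min_eq_left ((one_le_div (hQpos _)).mpr h), div_self hP.ne']
  have hA : Finset.univ.inf' hne
      (fun ℓ : Fin M => min 1 (∏ j ∈ Finset.univ.filter (fun j : Fin M => ℓ ≤ j), g j))
      = P / Z := by
    apply le_antisymm
    · obtain ⟨k, hk, hkZ⟩ := Finset.exists_mem_eq_sup' hrange Q
      rw [Finset.mem_range] at hk
      rcases lt_or_ge k M with hkM | hkM
      · refine le_trans (Finset.inf'_le _ (Finset.mem_univ (⟨k, hkM⟩ : Fin M))) ?_
        rw [hmin ⟨k, hkM⟩]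
        apply div_le_div_of_nonneg_left hP.le hZpos
        rw [hZdef, hkZ]
        exact le_max_right _ _
      · have hkM' : k = M := by omega
        have hZP : Z = P := by rw [hZdef, hkZ, hkM', hQM]
        refine le_trans (Finset.inf'_le _ (Finset.mem_univ (⟨0, hM⟩ : Fin M))) ?_
        rw [hmin ⟨0, hM⟩, hZP]
        exact div_le_div_of_nonneg_left hP.le hP (le_max_left _ _)
    · apply Finset.le_inf'
      intro ℓ _
      rw [hmin ℓ]
      apply div_le_div_of_nonneg_left hP.le (lt_of_lt_of_le hP (le_max_left _ _))
      exact max_le hPZ (hQZ _ (le_of_lt ℓ.isLt))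
  have hB : Finset.univ.sup' hne
      (fun ℓ : Fin M => max 1 (∏ j ∈ Finset.univ.filter (fun j : Fin M => j ≤ ℓ), g j))
      = Z := by
    apply le_antisymm
    · apply Finset.sup'_le
      intro ℓ _
      apply max_le
      · rw [← hQ0]; exact hQZ 0 (by omega)
      · rw [hprefix ℓ]; exact hQZ _ (by omega)
    · apply Finset.sup'_le
      intro k hk
      rw [Finset.mem_range] at hk
      match k, hk with
      | 0, _ =>
        rw [hQ0]
        exact le_trans (le_max_left 1 _)
          (Finset.le_sup' (fun ℓ : Fin M => max 1
            (∏ j ∈ Finset.univ.filter (fun j : Fin M => j ≤ ℓ), g j))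
            (Finset.mem_univ (⟨0, hM⟩ : Fin M)))
      | (j+1), hk =>
        have hjM : j < M := by omega
        rw [← hprefix ⟨j, hjM⟩]
        exact le_trans (le_max_right 1 _)
          (Finset.le_sup' (fun ℓ : Fin M => max 1
            (∏ j ∈ Finset.univ.filter (fun j : Fin M => j ≤ ℓ), g j))
            (Finset.mem_univ (⟨j, hjM⟩ : Fin M)))
  show Real.log (Finset.univ.inf' hne
      (fun ℓ : Fin M => min 1 (∏ j ∈ Finset.univ.filter (fun j : Fin M => ℓ ≤ j), g j)))
    + Real.log (Finset.univ.sup' hne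
      (fun ℓ : Fin M => max 1 (∏ j ∈ Finset.univ.filter (fun j : Fin M => j ≤ ℓ), g j)))
    = Real.log P
  rw [hA, hB, Real.log_div hP.ne' hZpos.ne']
  ring
end

section
/- For every f ∈ [0,1), E(Dcur^(M)(f,·)) + E(R^(M)(f,·)) = M·log Γ(f), where Dcur^(M)(f,ω) := log(min_{1≤ℓ≤M} min{1, TWR_ℓ^M(f,ω)}) and R^(M)(f,ω) := log(max_{1≤ℓ≤M} max{1, TWR_1^ℓ(f,ω)}). -/
/-!
Write `x_j = log (1 + f t_{ω_j} / t̂)` and `s_k = x_1 + ⋯ + x_k` (`s_0 = 0`). Taking the minimum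
with `1` (maximum with `1`) adds the empty suffix (prefix), so the current drawdown is
`min_{0 ≤ k ≤ M} (s_M - s_k) = s_M - max_k s_k` and the run-up is `max_{0 ≤ k ≤ M} s_k`: their sum
is `s_M` for every outcome `ω`. In expectation each of the `M` independent draws contributes
`∑_i p_i log (1 + f t_i / t̂) = log Γ(f)`.
-/

open Finset

section SupDecomposition

variable {α : Type*} [SemilatticeSup α] {M : ℕ}

theorem Fin.sup'_univ_eq_sup'_zero_sup_succ (hM : (univ : Finset (Fin M)).Nonempty)
    (g : Fin (M + 1) → α) :
    univ.sup' univ_nonempty g = univ.sup' hM (fun i => g 0 ⊔ g i.succ) := by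
  have : Nonempty (Fin M) := univ_nonempty_iff.mp hM
  refine eq_of_forall_ge_iff fun c => ?_
  simp [Fin.forall_fin_succ, forall_and]

theorem Fin.sup'_univ_eq_sup'_last_sup_castSucc (hM : (univ : Finset (Fin M)).Nonempty)
    (g : Fin (M + 1) → α) :
    univ.sup' univ_nonempty g = univ.sup' hM (fun i => g (Fin.last M) ⊔ g i.castSucc) := by
  have : Nonempty (Fin M) := univ_nonempty_iff.mp hM
  refine eq_of_forall_ge_iff fun c => ?_
  simp [Fin.forall_fin_succ', forall_and, and_comm]

end SupDecomposition

section OrderedGroup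

variable {α : Type*} [AddCommGroup α] [LinearOrder α] [IsOrderedAddMonoid α]

theorem Finset.sub_sup' {ι : Type*} {s : Finset ι} (hs : s.Nonempty) (a : α) (f : ι → α) :
    a - s.sup' hs f = s.inf' hs (fun i => a - f i) := by
  refine eq_of_forall_le_iff fun c => ?_
  rw [le_sub_comm, sup'_le_iff, le_inf'_iff]
  simp only [le_sub_comm]

theorem inf'_min_suffix_sum_add_sup'_max_prefix_sum {M : ℕ}
    (hM : (univ : Finset (Fin M)).Nonempty) (x : Fin M → α) :
    univ.inf' hM (fun ℓ => min 0 (∑ j ∈ univ.filter (fun j => ℓ ≤ j), x j)) +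
      univ.sup' hM (fun ℓ => max 0 (∑ j ∈ univ.filter (fun j => j ≤ ℓ), x j)) = ∑ j, x j := by
  set S := ∑ j, x j with hS
  set s : Fin (M + 1) → α := fun k => ∑ j ∈ univ.filter (fun j => j.castSucc < k), x j
  have hs_zero : s 0 = 0 := sum_eq_zero fun j hj => by simp at hj
  have hs_last : s (Fin.last M) = S := by simp [s, S, Fin.castSucc_lt_last]
  have hprefix (ℓ : Fin M) : ∑ j ∈ univ.filter (fun j => j ≤ ℓ), x j = s ℓ.succ := by
    simp [s]
  have hsuffix (ℓ : Fin M) :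
      min 0 (∑ j ∈ univ.filter (fun j => ℓ ≤ j), x j) = S - (S ⊔ s ℓ.castSucc) := by
    have hsplit : ∑ j ∈ univ.filter (fun j => ℓ ≤ j), x j = S - s ℓ.castSucc := by
      rw [eq_sub_iff_add_eq, hS, ← sum_filter_add_sum_filter_not univ (fun j => ℓ ≤ j) x]
      simp [s, not_le]
    rw [hsplit, ← min_sub_sub_left, sub_self]
  calc _ = univ.inf' hM (fun ℓ => S - (s (Fin.last M) ⊔ s ℓ.castSucc)) +
        univ.sup' hM (fun ℓ => s 0 ⊔ s ℓ.succ) := by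
        simp only [hprefix, hsuffix, hs_zero, hs_last]
    _ = S := by
        rw [← sub_sup', ← Fin.sup'_univ_eq_sup'_zero_sup_succ,
          ← Fin.sup'_univ_eq_sup'_last_sup_castSucc, sub_add_cancel]

end OrderedGroup

namespace Real

theorem log_inf'_exp {ι : Type*} {s : Finset ι} (hs : s.Nonempty) (F : ι → ℝ) :
    log (s.inf' hs fun i => exp (F i)) = s.inf' hs F := by
  rw [← Function.comp_def, ← apply_inf'_eq_inf'_comp hs exp fun _ _ => exp_monotone.map_min,
    log_exp]

theorem log_sup'_exp {ι : Type*} {s : Finset ι} (hs : s.Nonempty) (F : ι → ℝ) :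
    log (s.sup' hs fun i => exp (F i)) = s.sup' hs F := by
  rw [← Function.comp_def, ← apply_sup'_eq_sup'_comp hs exp fun _ _ => exp_monotone.map_max,
    log_exp]

theorem log_inf'_min_suffix_prod_add_log_sup'_max_prefix_prod {M : ℕ}
    (hM : (univ : Finset (Fin M)).Nonempty) {c : Fin M → ℝ} (hc : ∀ j, 0 < c j) :
    log (univ.inf' hM (fun ℓ => min 1 (∏ j ∈ univ.filter (fun j => ℓ ≤ j), c j))) +
      log (univ.sup' hM (fun ℓ => max 1 (∏ j ∈ univ.filter (fun j => j ≤ ℓ), c j))) =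
      ∑ j, log (c j) := by
  obtain ⟨y, rfl⟩ : ∃ y : Fin M → ℝ, c = fun j => exp (y j) :=
    ⟨fun j => log (c j), funext fun j => (exp_log (hc j)).symm⟩
  simp only [← exp_sum, ← exp_zero, ← exp_monotone.map_min, ← exp_monotone.map_max,
    log_inf'_exp, log_sup'_exp, log_exp]
  exact inf'_min_suffix_sum_add_sup'_max_prefix_sum hM y

theorem one_add_mul_div_pos {f a T : ℝ} (hf₀ : 0 ≤ f) (hf₁ : f < 1) (hT : 0 < T)
    (ha : -T ≤ a) : 0 < 1 + f * a / T := by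
  have : -1 ≤ a / T := by rwa [le_div_iff₀ hT, neg_one_mul]
  rw [mul_div_assoc]
  nlinarith

end Real

section Expectation

variable {ι κ R : Type*} [Fintype ι] [DecidableEq ι] [Fintype κ] [CommSemiring R]
  {p : κ → R}

theorem sum_pi_prod_mul_apply (hp : ∑ i, p i = 1) (L : κ → R) (k : ι) :
    ∑ ω : ι → κ, (∏ j, p (ω j)) * L (ω k) = ∑ i, p i * L i := by
  let q : ι → κ → R := fun j i => p i * if j = k then L i else 1
  have hq (ω : ι → κ) : (∏ j, p (ω j)) * L (ω k) = ∏ j, q j (ω j) := by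
    simp only [q, prod_mul_distrib, prod_ite_eq', mem_univ, if_true]
  have hq_sum (j : ι) : ∑ i, q j i = if j = k then ∑ i, p i * L i else 1 := by
    split_ifs with h <;> simp [q, h, hp]
  simp_rw [hq, ← Fintype.prod_sum, hq_sum, prod_ite_eq', mem_univ, if_true]

theorem sum_pi_prod_mul_sum_apply (hp : ∑ i, p i = 1) (L : κ → R) :
    ∑ ω : ι → κ, (∏ j, p (ω j)) * ∑ k, L (ω k) = Fintype.card ι • ∑ i, p i * L i := by
  simp_rw [mul_sum]
  rw [sum_comm]
  simp_rw [sum_pi_prod_mul_apply hp L, sum_const, card_univ]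

end Expectation

theorem stmt_11_general (N : ℕ) (t : Fin N → ℝ) (that : ℝ)
    (hthat : IsGreatest {x : ℝ | ∃ i, t i < 0 ∧ x = |t i|} that)
    (hthat_pos : 0 < that)
    (p : Fin N → ℝ) (hpsum : ∑ i, p i = 1)
    (M : ℕ) (hM : 1 ≤ M) :
    ∀ f ∈ Set.Ico (0 : ℝ) 1,
      (∑ ω : Fin M → Fin N, (∏ j, p (ω j)) *
        Real.log ((Finset.univ : Finset (Fin M)).inf'
          (Finset.univ_nonempty_iff.mpr (Fin.pos_iff_nonempty.mp hM))
          (fun ℓ => min 1 (∏ j ∈ Finset.univ.filter (fun j : Fin M => ℓ ≤ j),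
            (1 + f * t (ω j) / that)))))
      + (∑ ω : Fin M → Fin N, (∏ j, p (ω j)) *
        Real.log ((Finset.univ : Finset (Fin M)).sup'
          (Finset.univ_nonempty_iff.mpr (Fin.pos_iff_nonempty.mp hM))
          (fun ℓ => max 1 (∏ j ∈ Finset.univ.filter (fun j : Fin M => j ≤ ℓ),
            (1 + f * t (ω j) / that)))))
      = (M : ℝ) * Real.log (∏ i, (1 + f * t i / that) ^ (p i)) := by
  rintro f ⟨hf₀, hf₁⟩
  have hpos (i : Fin N) : 0 < 1 + f * t i / that := by
    refine Real.one_add_mul_div_pos hf₀ hf₁ hthat_pos ?_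
    rcases lt_or_ge (t i) 0 with hi | hi
    · have := hthat.2 ⟨i, hi, rfl⟩
      rw [abs_of_neg hi] at this
      linarith
    · linarith
  rw [← sum_add_distrib]
  simp_rw [← mul_add, Real.log_inf'_min_suffix_prod_add_log_sup'_max_prefix_prod _
    (fun j => hpos _)]
  rw [sum_pi_prod_mul_sum_apply hpsum (fun i => Real.log (1 + f * t i / that)),
    Real.log_prod fun i _ => (Real.rpow_pos_of_pos (hpos i) _).ne', Fintype.card_fin,
    nsmul_eq_mul]
  simp_rw [Real.log_rpow (hpos _)]

/-- `E(Dcur^(M)(f,·)) + E(R^(M)(f,·)) = M·log Γ(f)` for every `f ∈ [0,1)`, where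
`Dcur^(M)` is the current drawdown log series and `R^(M)` is the run-up log series. -/
theorem stmt_11 (N : ℕ) (hN : 1 ≤ N) (t : Fin N → ℝ) (ht : ∀ i, t i ≠ 0)
    (hneg : ∃ i, t i < 0) (that : ℝ)
    (hthat : IsGreatest {x : ℝ | ∃ i, t i < 0 ∧ x = |t i|} that)
    (hthat_pos : 0 < that)
    (p : Fin N → ℝ) (hp : ∀ i, 0 < p i) (hpsum : ∑ i, p i = 1)
    (M : ℕ) (hM : 1 ≤ M) :
    ∀ f ∈ Set.Ico (0 : ℝ) 1,
      (∑ ω : Fin M → Fin N, (∏ j, p (ω j)) *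
        Real.log ((Finset.univ : Finset (Fin M)).inf'
          (Finset.univ_nonempty_iff.mpr (Fin.pos_iff_nonempty.mp hM))
          (fun ℓ => min 1 (∏ j ∈ Finset.univ.filter (fun j : Fin M => ℓ ≤ j),
            (1 + f * t (ω j) / that)))))
      + (∑ ω : Fin M → Fin N, (∏ j, p (ω j)) *
        Real.log ((Finset.univ : Finset (Fin M)).sup'
          (Finset.univ_nonempty_iff.mpr (Fin.pos_iff_nonempty.mp hM))
          (fun ℓ => max 1 (∏ j ∈ Finset.univ.filter (fun j : Fin M => j ≤ ℓ),
            (1 + f * t (ω j) / that)))))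
      = (M : ℝ) * Real.log (∏ i, (1 + f * t i / that) ^ (p i)) :=
  stmt_11_general N t that hthat hthat_pos p hpsum M hM
end
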